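/- For n ≥ 4, if π is chosen uniformly at random from S_n, then the variance of the number of peaks is Var(p(π)) = 2(n+1)/45. -/

import Mathlib

/-!
Write `p(π) = ∑ Xᵢ` with `Xᵢ` the indicator of a peak at `i`. An event about the values of `π`
at `k` fixed positions that only depends on their relative order has probability
`#{τ ∈ S_k | …} / k!`, since the relative order is uniform on `S_k`. Counting patterns in `S₃`, `S₅`
and `S₆` gives `P(Xᵢ) = 1/3`, `P(XᵢXᵢ₊₁) = 0`, `P(XᵢXᵢ₊₂) = 2/15` and `P(XᵢXⱼ) = 1/9` for
`|i - j| ≥ 3`. So `Cov(Xᵢ, Xⱼ)` depends only on `|i - j|` and vanishes from distance `3` on, and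
summing this banded covariance matrix over `1 ≤ i, j ≤ n - 2` gives
`(n - 2)·2/9 - 2(n - 3)/9 + 2(n - 4)/45 = 2(n + 1)/45`.
-/

/-- The value `π(i)` as a natural number, for a permutation `π ∈ S_n` (0-indexed),
with value `0` outside the range. -/
def permVal (n : ℕ) (π : Equiv.Perm (Fin n)) (i : ℕ) : ℕ :=
  if h : i < n then (π ⟨i, h⟩ : ℕ) else 0

/-- The number of peaks of a permutation `π ∈ S_n`: positions `i` (0-indexed,
`1 ≤ i ≤ n-2`, corresponding to 1-indexed positions `1 < i < n`) with
`π(i-1) < π(i) > π(i+1)`. -/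
def peaks (n : ℕ) (π : Equiv.Perm (Fin n)) : ℕ :=
  ((Finset.Ico 1 (n - 1)).filter fun i =>
    permVal n π (i - 1) < permVal n π i ∧ permVal n π (i + 1) < permVal n π i).card

open Finset Equiv Function
open scoped Nat

def OrderInvariant {k : ℕ} (Q : (Fin k → ℕ) → Prop) : Prop :=
  ∀ f g : Fin k → ℕ, (∀ a b, f a < f b ↔ g a < g b) → (Q f ↔ Q g)

section Pattern

variable {n k : ℕ} {Q : (Fin k → ℕ) → Prop} [DecidablePred Q]

theorem card_filter_comp_perm_eq_of_orderInvariant (hQ : OrderInvariant Q) {f : Fin k → ℕ}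
    (hf : Injective f) :
    #{τ : Perm (Fin k) | Q (f ∘ τ)} = #{τ : Perm (Fin k) | Q fun a => τ a} := by
  set σ := (Tuple.sort f)⁻¹
  have hsorted : StrictMono (f ∘ Tuple.sort f) :=
    (Tuple.monotone_sort f).strictMono_of_injective (hf.comp (Equiv.injective _))
  have hσ : ∀ a b, f a < f b ↔ σ a < σ b := fun a b => by
    simpa [σ] using hsorted.lt_iff_lt (a := σ a) (b := σ b)
  refine card_equiv (Equiv.mulLeft σ) fun τ => ?_
  simp only [mem_filter, mem_univ, true_and, coe_mulLeft, Perm.mul_apply]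
  exact hQ _ _ fun a b => (hσ _ _).trans Fin.lt_def

theorem card_filter_comp_embedding_comp_perm_eq {α β : Type*} [Fintype β] [DecidableEq β]
    (ι : α ↪ β) (τ : Perm α) (R : (α → β) → Prop) [DecidablePred R] :
    #{π : Perm β | R fun a => π (ι (τ a))} = #{π : Perm β | R fun a => π (ι a)} := by
  refine card_equiv (Equiv.mulRight (τ.viaEmbedding ι)) fun π => ?_
  simp [Perm.viaEmbedding_apply]

theorem card_filter_pattern_mul_factorial (hQ : OrderInvariant Q) (pos : Fin k ↪ Fin n) :
    #{π : Perm (Fin n) | Q fun a => π (pos a)} * k ! =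
      n ! * #{τ : Perm (Fin k) | Q fun a => τ a} := by
  calc #{π : Perm (Fin n) | Q fun a => π (pos a)} * k !
      = ∑ _τ : Perm (Fin k), #{π : Perm (Fin n) | Q fun a => π (pos a)} := by
        simp [Fintype.card_perm, mul_comm]
    _ = ∑ τ : Perm (Fin k), #{π : Perm (Fin n) | Q fun a => π (pos (τ a))} :=
        sum_congr rfl fun τ _ =>
          (card_filter_comp_embedding_comp_perm_eq pos τ fun g => Q fun a => g a).symm
    _ = ∑ π : Perm (Fin n), #{τ : Perm (Fin k) | Q fun a => π (pos (τ a))} := by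
        simp only [card_filter]
        exact sum_comm
    _ = ∑ _π : Perm (Fin n), #{τ : Perm (Fin k) | Q fun a => τ a} :=
        sum_congr rfl fun π _ => card_filter_comp_perm_eq_of_orderInvariant hQ
          (f := fun a => π (pos a)) fun a b h => pos.injective (π.injective (Fin.ext h))
    _ = n ! * #{τ : Perm (Fin k) | Q fun a => τ a} := by
        simp [Fintype.card_perm]

theorem card_filter_permVal_pattern_mul_factorial (hQ : OrderInvariant Q) (pos : Fin k → ℕ)
    (hpos : Injective pos) (hlt : ∀ a, pos a < n) :
    #{π : Perm (Fin n) | Q fun a => permVal n π (pos a)} * k ! =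
      n ! * #{τ : Perm (Fin k) | Q fun a => τ a} := by
  have hval (π : Perm (Fin n)) :
      (fun a => permVal n π (pos a)) = fun a => (π ⟨pos a, hlt a⟩ : ℕ) :=
    funext fun a => dif_pos (hlt a)
  simp only [hval]
  exact card_filter_pattern_mul_factorial hQ
    ⟨fun a => ⟨pos a, hlt a⟩, fun a b h => hpos (congrArg Fin.val h)⟩

end Pattern

theorem Finset.sum_range_sum_range_dist {M : Type*} [AddCommMonoid M] (c : ℕ → M) (m : ℕ) :
    ∑ i ∈ range m, ∑ j ∈ range m, c (i.dist j) =
      m • c 0 + 2 • ∑ d ∈ Ico 1 m, (m - d) • c d := by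
  induction m with
  | zero => simp
  | succ m ih =>
    have hcol : ∑ i ∈ range m, c (i.dist m) = ∑ d ∈ Ico 1 (m + 1), c d := by
      rw [sum_Ico_eq_sum_range, ← sum_range_reflect, Nat.add_sub_cancel]
      refine sum_congr rfl fun i hi => congrArg c ?_
      rw [mem_range] at hi
      rw [Nat.dist_eq_sub_of_le (by omega)]
      omega
    have hweights : ∑ d ∈ Ico 1 (m + 1), (m + 1 - d) • c d =
        ∑ d ∈ Ico 1 m, (m - d) • c d + ∑ d ∈ Ico 1 (m + 1), c d := by
      have hextend : ∑ d ∈ Ico 1 m, (m - d) • c d = ∑ d ∈ Ico 1 (m + 1), (m - d) • c d :=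
        sum_subset (Ico_subset_Ico_right m.le_succ) fun d hd hd' => by
          rw [mem_Ico] at hd hd'
          rw [show m - d = 0 by omega, zero_smul]
      rw [hextend, ← sum_add_distrib]
      refine sum_congr rfl fun d hd => ?_
      rw [mem_Ico] at hd
      rw [show m + 1 - d = m - d + 1 by omega, add_smul, one_smul]
    simp only [sum_range_succ, sum_add_distrib, ih, hcol, hweights, Nat.dist_comm m,
      Nat.dist_self]
    simp only [add_smul, one_smul, smul_add]
    abel

theorem Finset.sum_range_sum_range_dist_of_eq_zero {M : Type*} [AddCommMonoid M] {c : ℕ → M}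
    (hc : ∀ d, 3 ≤ d → c d = 0) (m : ℕ) :
    ∑ i ∈ range m, ∑ j ∈ range m, c (i.dist j) =
      m • c 0 + 2 • ((m - 1) • c 1 + (m - 2) • c 2) := by
  rw [sum_range_sum_range_dist, sum_eq_add 1 2 (by decide)]
  · intro d hd hd12
    rw [mem_Ico] at hd
    rw [hc d (by omega), smul_zero]
  · intro h
    rw [mem_Ico] at h
    rw [show m - 1 = 0 by omega, zero_smul]
  · intro h
    rw [mem_Ico] at h
    rw [show m - 2 = 0 by omega, zero_smul]

theorem Finset.sum_card_filter_sq {ι α : Type*} [Fintype α] (s : Finset ι) (r : ι → α → Prop)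
    [∀ i a, Decidable (r i a)] :
    ∑ a, #{i ∈ s | r i a} ^ 2 = ∑ i ∈ s, ∑ j ∈ s, #{a | r i a ∧ r j a} := by
  simp only [card_filter, sq, sum_mul_sum, ite_zero_mul_ite_zero, mul_one]
  rw [sum_comm]
  exact sum_congr rfl fun i _ => sum_comm

def IsPeakAt (n : ℕ) (π : Perm (Fin n)) (i : ℕ) : Prop :=
  permVal n π (i - 1) < permVal n π i ∧ permVal n π (i + 1) < permVal n π i

instance {n : ℕ} {π : Perm (Fin n)} : DecidablePred (IsPeakAt n π) := fun _ => instDecidableAnd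

/-- `P(peaks at i and at i + d) - 1/9`: the joint probabilities are `1/3`, `0`, `16/120` and,
for disjoint windows, `80/720`. -/
noncomputable def peakCovariance : ℕ → ℝ
  | 0 => 2 / 9
  | 1 => -1 / 9
  | 2 => 1 / 45
  | _ => 0

theorem sum_sum_peakCovariance (m : ℕ) :
    ∑ i ∈ Ico 1 (m + 1), ∑ j ∈ Ico 1 (m + 1), peakCovariance (i.dist j) =
      m * (2 / 9) + 2 * (((m - 1 : ℕ) : ℝ) * (-1 / 9) + ((m - 2 : ℕ) : ℝ) * (1 / 45)) := by
  simp only [sum_Ico_eq_sum_range, Nat.dist_add_add_left, Nat.add_sub_cancel]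
  rw [sum_range_sum_range_dist_of_eq_zero fun d hd => ?_]
  · simp only [peakCovariance, nsmul_eq_mul, smul_add]
    push_cast
    ring
  · match d, hd with
    | d + 3, _ => rfl

section Peaks

variable {n i j : ℕ}

theorem peaks_eq_card_filter_isPeakAt (π : Perm (Fin n)) :
    peaks n π = #{i ∈ Ico 1 (n - 1) | IsPeakAt n π i} := rfl

theorem not_isPeakAt_add_one {π : Perm (Fin n)} (h : IsPeakAt n π i) : ¬IsPeakAt n π (i + 1) :=
  fun h' => lt_asymm h.2 (by simpa [IsPeakAt] using h'.1)

theorem card_isPeakAt_mul_three (hi : 1 ≤ i) (hin : i + 1 < n) :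
    #{π : Perm (Fin n) | IsPeakAt n π i} * 3 = n ! := by
  have key : #{π : Perm (Fin n) | IsPeakAt n π i} * 3 ! =
      n ! * #{τ : Perm (Fin 3) | τ 0 < (τ 1 : ℕ) ∧ τ 2 < (τ 1 : ℕ)} :=
    card_filter_permVal_pattern_mul_factorial (fun f g h => and_congr (h 0 1) (h 2 1))
      ![i - 1, i, i + 1]
      (by intro a b h; fin_cases a <;> fin_cases b <;> simp at h ⊢ <;> omega)
      (by intro a; fin_cases a <;> simp <;> omega)
  rw [show #{τ : Perm (Fin 3) | τ 0 < (τ 1 : ℕ) ∧ τ 2 < (τ 1 : ℕ)} = 2 by decide,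
    show 3 ! = 6 from rfl] at key
  omega

theorem card_isPeakAt_and_isPeakAt_add_two_mul_fifteen (hi : 1 ≤ i) (hin : i + 3 < n) :
    #{π : Perm (Fin n) | IsPeakAt n π i ∧ IsPeakAt n π (i + 2)} * 15 = n ! * 2 := by
  have key : #{π : Perm (Fin n) | IsPeakAt n π i ∧ IsPeakAt n π (i + 2)} * 5 ! =
      n ! * #{τ : Perm (Fin 5) | (τ 0 < (τ 1 : ℕ) ∧ τ 2 < (τ 1 : ℕ)) ∧
        (τ 2 < (τ 3 : ℕ) ∧ τ 4 < (τ 3 : ℕ))} :=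
    card_filter_permVal_pattern_mul_factorial
      (fun f g h => and_congr (and_congr (h 0 1) (h 2 1)) (and_congr (h 2 3) (h 4 3)))
      ![i - 1, i, i + 1, i + 2, i + 3]
      (by intro a b h; fin_cases a <;> fin_cases b <;> simp at h ⊢ <;> omega)
      (by intro a; fin_cases a <;> simp <;> omega)
  rw [show #{τ : Perm (Fin 5) | (τ 0 < (τ 1 : ℕ) ∧ τ 2 < (τ 1 : ℕ)) ∧
        (τ 2 < (τ 3 : ℕ) ∧ τ 4 < (τ 3 : ℕ))} = 16 by decide,
    show 5 ! = 120 from rfl] at key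
  omega

set_option maxRecDepth 10000 in
theorem card_isPeakAt_and_isPeakAt_mul_nine (hi : 1 ≤ i) (hij : i + 3 ≤ j) (hjn : j + 1 < n) :
    #{π : Perm (Fin n) | IsPeakAt n π i ∧ IsPeakAt n π j} * 9 = n ! := by
  have key : #{π : Perm (Fin n) | IsPeakAt n π i ∧ IsPeakAt n π j} * 6 ! =
      n ! * #{τ : Perm (Fin 6) | (τ 0 < (τ 1 : ℕ) ∧ τ 2 < (τ 1 : ℕ)) ∧
        (τ 3 < (τ 4 : ℕ) ∧ τ 5 < (τ 4 : ℕ))} :=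
    card_filter_permVal_pattern_mul_factorial
      (fun f g h => and_congr (and_congr (h 0 1) (h 2 1)) (and_congr (h 3 4) (h 5 4)))
      ![i - 1, i, i + 1, j - 1, j, j + 1]
      (by intro a b h; fin_cases a <;> fin_cases b <;> simp at h ⊢ <;> omega)
      (by intro a; fin_cases a <;> simp <;> omega)
  rw [show #{τ : Perm (Fin 6) | (τ 0 < (τ 1 : ℕ) ∧ τ 2 < (τ 1 : ℕ)) ∧
        (τ 3 < (τ 4 : ℕ) ∧ τ 5 < (τ 4 : ℕ))} = 80 by decide,
    show 6 ! = 720 from rfl] at key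
  omega

theorem card_isPeakAt_and_isPeakAt_eq (hi : i ∈ Ico 1 (n - 1)) (hj : j ∈ Ico 1 (n - 1)) :
    (#{π : Perm (Fin n) | IsPeakAt n π i ∧ IsPeakAt n π j} : ℝ) =
      n ! * (1 / 9 + peakCovariance (i.dist j)) := by
  wlog hle : i ≤ j generalizing i j
  · rw [Nat.dist_comm, ← this hj hi (by omega)]
    simp only [and_comm]
  rw [mem_Ico] at hi hj
  obtain ⟨d, rfl⟩ := Nat.exists_eq_add_of_le hle
  rw [Nat.dist_eq_sub_of_le hle, Nat.add_sub_cancel_left]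
  match d with
  | 0 =>
    have h : (#{π : Perm (Fin n) | IsPeakAt n π i} : ℝ) * 3 = n ! := by
      exact_mod_cast card_isPeakAt_mul_three hi.1 (by omega)
    simp only [add_zero, and_self, peakCovariance]
    linarith
  | 1 =>
    rw [filter_false_of_mem fun π _ h => not_isPeakAt_add_one h.1 h.2]
    norm_num [peakCovariance]
  | 2 =>
    have h : (#{π : Perm (Fin n) | IsPeakAt n π i ∧ IsPeakAt n π (i + 2)} : ℝ) * 15 =
        n ! * 2 := by
      exact_mod_cast card_isPeakAt_and_isPeakAt_add_two_mul_fifteen hi.1 (by omega)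
    simp only [peakCovariance]
    linarith
  | d + 3 =>
    have h : (#{π : Perm (Fin n) | IsPeakAt n π i ∧ IsPeakAt n π (i + (d + 3))} : ℝ) * 9 =
        n ! := by
      exact_mod_cast card_isPeakAt_and_isPeakAt_mul_nine hi.1 (by omega) (by omega)
    simp only [peakCovariance]
    linarith

end Peaks

theorem sum_peaks_eq (n : ℕ) :
    ∑ π : Perm (Fin n), (peaks n π : ℝ) = ∑ _i ∈ Ico 1 (n - 1), (n ! : ℝ) / 3 := by
  have h : ∑ π : Perm (Fin n), peaks n π = ∑ i ∈ Ico 1 (n - 1), #{π | IsPeakAt n π i} :=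
    (sum_card_bipartiteAbove_eq_sum_card_bipartiteBelow fun i π => IsPeakAt n π i).symm
  rw [← Nat.cast_sum, h, Nat.cast_sum]
  refine sum_congr rfl fun i hi => eq_div_of_mul_eq three_ne_zero ?_
  rw [mem_Ico] at hi
  exact_mod_cast card_isPeakAt_mul_three hi.1 (by omega)

theorem sum_sq_peaks_eq (n : ℕ) :
    ∑ π : Perm (Fin n), (peaks n π : ℝ) ^ 2 =
      ∑ i ∈ Ico 1 (n - 1), ∑ j ∈ Ico 1 (n - 1),
        (n ! : ℝ) * (1 / 9 + peakCovariance (i.dist j)) := by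
  have h : ∑ π : Perm (Fin n), peaks n π ^ 2 =
      ∑ i ∈ Ico 1 (n - 1), ∑ j ∈ Ico 1 (n - 1), #{π | IsPeakAt n π i ∧ IsPeakAt n π j} :=
    sum_card_filter_sq _ fun i π => IsPeakAt n π i
  rw [← Nat.cast_inj (R := ℝ)] at h
  push_cast at h
  rw [h]
  exact sum_congr rfl fun i hi => sum_congr rfl fun j hj => card_isPeakAt_and_isPeakAt_eq hi hj

theorem variance_peaks (n : ℕ) (hn : 4 ≤ n) :
    (∑ π : Equiv.Perm (Fin n), (peaks n π : ℝ) ^ 2) / (Nat.factorial n : ℝ)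
        - ((∑ π : Equiv.Perm (Fin n), (peaks n π : ℝ)) / (Nat.factorial n : ℝ)) ^ 2
      = 2 * ((n : ℝ) + 1) / 45 := by
  rw [sum_peaks_eq, sum_sq_peaks_eq]
  simp only [← mul_sum, sum_add_distrib, show n - 1 = n - 2 + 1 by omega, sum_sum_peakCovariance]
  obtain ⟨m, rfl⟩ : ∃ m, n = m + 4 := ⟨n - 4, by omega⟩
  simp only [sum_const, Nat.card_Ico, nsmul_eq_mul]
  push_cast
  field_simp
  ring
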